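/- For games H, K over a poset A: H ≤ K holds if and only if both H ≤_L K and H ≤_R K hold. -/

import Mathlib

inductive Game (A : Type) : Type 1 where
  | atom : A → Game A
  | comp : (ι κ : Type) → (ι → Game A) → (κ → Game A) → Nonempty ι → Nonempty κ → Game A

namespace Game

variable {A : Type}

/-- `G.IsAtom` holds iff `G` is an atomic game. -/
def IsAtom : Game A → Prop
  | atom _ => True
  | comp _ _ _ _ _ _ => False

/-- `G.IsLeftOption x`: `x` is a left option of `G`. -/
def IsLeftOption : Game A → Game A → Prop
  | atom _, _ => False
  | comp _ _ L _ _ _, x => ∃ i, L i = x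

/-- `G.IsRightOption y`: `y` is a right option of `G`. -/
def IsRightOption : Game A → Game A → Prop
  | atom _, _ => False
  | comp _ _ _ R _ _, x => ∃ j, R j = x

section Ord

variable [PartialOrder A]

mutual
  /-- The order relation `G ≤ H` on games over a poset. -/
  inductive Le : Game A → Game A → Prop
    | mk : ∀ {G H : Game A},
        (∀ x, G.IsLeftOption x → Tri x H) →
        (∀ y, H.IsRightOption y → Tri G y) →
        ((G.IsAtom ∨ H.IsAtom) → Tri G H) →
        Le G H
  /-- The relation `G ◁ H` on games over a poset. -/
  inductive Tri : Game A → Game A → Prop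
    | ofRight : ∀ {G H y : Game A}, G.IsRightOption y → Le y H → Tri G H
    | ofLeft : ∀ {G H x : Game A}, H.IsLeftOption x → Le G x → Tri G H
    | ofAtom : ∀ {a b : A}, a ≤ b → Tri (Game.atom a) (Game.atom b)
end

/-- Equivalence of games: `G ≤ H` and `H ≤ G`. -/
def Equiv (G H : Game A) : Prop := Le G H ∧ Le H G

/-- A game is monotone if all of its options are good, and recursively all
options are monotone. -/
inductive Monotone : Game A → Prop
  | mk : ∀ {G : Game A},
      (∀ x, G.IsLeftOption x → Le G x) →
      (∀ y, G.IsRightOption y → Le y G) →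
      (∀ x, G.IsLeftOption x → Monotone x) →
      (∀ y, G.IsRightOption y → Monotone y) →
      Monotone G

/-- A game is passable if `G ◁ G` and recursively all options are passable. -/
inductive Passable : Game A → Prop
  | mk : ∀ {G : Game A}, Tri G G →
      (∀ x, G.IsLeftOption x → Passable x) →
      (∀ y, G.IsRightOption y → Passable y) →
      Passable G

end Ord

end Game

/-!
One direction is monotonicity of contexts. Conversely, take the left context whose right options
are traps: for each subposition `v` of `H`, a game `r` with `¬ v ◁ r` if there is one. From
`⟨H | traps⟩ ≤ ⟨K | traps⟩` we get `H ◁ ⟨K | traps⟩`. A subposition of `H` that is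
`≤ ⟨K | traps⟩` is `◁` every trap, hence `◁` every game, and an induction over the subpositions
of `H` then gives `H ◁ K^R` for every right option `K^R`. Dually a right context gives
`H^L ◁ K`, and the same two instances settle the case where `H` or `K` is atomic.
-/

namespace Game

variable {A : Type}

theorem optionInduction {P : Game A → Prop}
    (ind : ∀ g, (∀ u, g.IsLeftOption u → P u) → (∀ u, g.IsRightOption u → P u) → P g)
    (g : Game A) : P g := by
  induction g with
  | atom a => exact ind _ (fun _ hu => hu.elim) (fun _ hu => hu.elim)
  | comp ι κ L R _ _ ihL ihR =>
    exact ind _ (by rintro _ ⟨i, rfl⟩; exact ihL i) (by rintro _ ⟨j, rfl⟩; exact ihR j)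

theorem IsAtom.not_isLeftOption {g u : Game A} (hg : g.IsAtom) : ¬g.IsLeftOption u := by
  cases g with
  | atom a => exact id
  | comp => exact hg.elim

theorem IsAtom.not_isRightOption {g u : Game A} (hg : g.IsAtom) : ¬g.IsRightOption u := by
  cases g with
  | atom a => exact id
  | comp => exact hg.elim

theorem eq_of_isLeftOption_comp_sumElim_empty {κ : Type} {K : Game A} {R : κ → Game A}
    {hι : Nonempty (Unit ⊕ Empty)} {hκ : Nonempty κ} (x : Game A)
    (hx : (comp _ κ (Sum.elim (fun _ => K) Empty.elim) R hι hκ).IsLeftOption x) : x = K := by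
  obtain ⟨_ | e, rfl⟩ := hx
  exacts [rfl, e.elim]

theorem eq_of_isRightOption_comp_sumElim_empty {ι : Type} {H : Game A} {L : ι → Game A}
    {hι : Nonempty ι} {hκ : Nonempty (Unit ⊕ Empty)} (y : Game A)
    (hy : (comp ι _ L (Sum.elim (fun _ => H) Empty.elim) hι hκ).IsRightOption y) : y = H := by
  obtain ⟨_ | e, rfl⟩ := hy
  exacts [rfl, e.elim]

/-- The subpositions of a game, indexed by a `Type` so that they can serve as the options of a
game. -/
def subpositions : Game A → Σ ι : Type, ι → Game A
  | atom a => ⟨Unit, fun _ => atom a⟩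
  | comp ι κ L R hι hκ =>
    ⟨Unit ⊕ ((Σ i, (subpositions (L i)).1) ⊕ (Σ j, (subpositions (R j)).1)),
      Sum.elim (fun _ => comp ι κ L R hι hκ)
        (Sum.elim (fun p => (subpositions (L p.1)).2 p.2)
          (fun p => (subpositions (R p.1)).2 p.2))⟩

def IsSubposition (g v : Game A) : Prop := ∃ p, (subpositions g).2 p = v

theorem IsSubposition.refl (g : Game A) : IsSubposition g g := by
  cases g with
  | atom a => exact ⟨(), rfl⟩
  | comp => exact ⟨Sum.inl (), rfl⟩

theorem nonempty_subpositions (g : Game A) : Nonempty (subpositions g).1 :=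
  ⟨(IsSubposition.refl g).choose⟩

theorem IsSubposition.of_isLeftOption {g u v : Game A} (hu : g.IsLeftOption u)
    (hv : IsSubposition u v) : IsSubposition g v := by
  cases g with
  | atom a => exact hu.elim
  | comp ι κ L R hι hκ =>
    obtain ⟨i, rfl⟩ := hu
    obtain ⟨p, hp⟩ := hv
    exact ⟨Sum.inr (Sum.inl ⟨i, p⟩), hp⟩

theorem IsSubposition.of_isRightOption {g u v : Game A} (hu : g.IsRightOption u)
    (hv : IsSubposition u v) : IsSubposition g v := by
  cases g with
  | atom a => exact hu.elim
  | comp ι κ L R hι hκ =>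
    obtain ⟨j, rfl⟩ := hu
    obtain ⟨p, hp⟩ := hv
    exact ⟨Sum.inr (Sum.inr ⟨j, p⟩), hp⟩

section Ord

variable [PartialOrder A]

theorem Le.refl (g : Game A) : Le g g := by
  induction g with
  | atom a => exact Le.mk (fun _ hu => hu.elim) (fun _ hu => hu.elim) fun _ => Tri.ofAtom le_rfl
  | comp ι κ L R hι hκ ihL ihR =>
    refine Le.mk ?_ ?_ ?_
    · rintro _ ⟨i, rfl⟩
      exact Tri.ofLeft ⟨i, rfl⟩ (ihL i)
    · rintro _ ⟨j, rfl⟩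
      exact Tri.ofRight ⟨j, rfl⟩ (ihR j)
    · rintro (h | h) <;> exact h.elim

theorem comp_le_comp_of_le_left {ι κ : Type} {L L' : ι → Game A} {R : κ → Game A}
    {hι : Nonempty ι} {hκ : Nonempty κ} (h : ∀ i, Le (L i) (L' i)) :
    Le (comp ι κ L R hι hκ) (comp ι κ L' R hι hκ) := by
  refine Le.mk ?_ ?_ ?_
  · rintro _ ⟨i, rfl⟩
    exact Tri.ofLeft ⟨i, rfl⟩ (h i)
  · rintro _ ⟨j, rfl⟩
    exact Tri.ofRight ⟨j, rfl⟩ (Le.refl _)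
  · rintro (h | h) <;> exact h.elim

theorem comp_le_comp_of_le_right {ι κ : Type} {L : ι → Game A} {R R' : κ → Game A}
    {hι : Nonempty ι} {hκ : Nonempty κ} (h : ∀ j, Le (R j) (R' j)) :
    Le (comp ι κ L R hι hκ) (comp ι κ L R' hι hκ) := by
  refine Le.mk ?_ ?_ ?_
  · rintro _ ⟨i, rfl⟩
    exact Tri.ofLeft ⟨i, rfl⟩ (Le.refl _)
  · rintro _ ⟨j, rfl⟩
    exact Tri.ofRight ⟨j, rfl⟩ (h j)
  · rintro (h | h) <;> exact h.elim

def IsRightTrap (T g : Game A) : Prop :=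
  ∀ v, IsSubposition g v → (∀ y, T.IsRightOption y → Tri v y) → ∀ r, Tri v r

def IsLeftTrap (T g : Game A) : Prop :=
  ∀ v, IsSubposition g v → (∀ x, T.IsLeftOption x → Tri x v) → ∀ l, Tri l v

noncomputable def rightTrap (v : Game A) : Game A :=
  @Classical.epsilon _ ⟨v⟩ fun r => ¬Tri v r

noncomputable def leftTrap (v : Game A) : Game A :=
  @Classical.epsilon _ ⟨v⟩ fun l => ¬Tri l v

theorem tri_of_tri_rightTrap {v : Game A} (h : Tri v (rightTrap v)) (r : Game A) : Tri v r := by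
  by_contra hr
  exact Classical.epsilon_spec (p := fun r => ¬Tri v r) ⟨r, hr⟩ h

theorem tri_of_tri_leftTrap {v : Game A} (h : Tri (leftTrap v) v) (l : Game A) : Tri l v := by
  by_contra hl
  exact Classical.epsilon_spec (p := fun l => ¬Tri l v) ⟨l, hl⟩ h

theorem isRightTrap_comp_rightTrap {ι : Type} {L : ι → Game A} (g : Game A) {hι : Nonempty ι}
    {hκ : Nonempty (subpositions g).1} :
    IsRightTrap (comp ι _ L (fun p => rightTrap ((subpositions g).2 p)) hι hκ) g := by
  rintro v ⟨p, rfl⟩ h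
  exact tri_of_tri_rightTrap (h _ ⟨p, rfl⟩)

theorem isLeftTrap_comp_leftTrap {κ : Type} {R : κ → Game A} (g : Game A)
    {hι : Nonempty (subpositions g).1} {hκ : Nonempty κ} :
    IsLeftTrap (comp _ κ (fun p => leftTrap ((subpositions g).2 p)) R hι hκ) g := by
  rintro v ⟨p, rfl⟩ h
  exact tri_of_tri_leftTrap (h _ ⟨p, rfl⟩)

section Trap

variable {T H K : Game A}

theorem IsRightTrap.le_and_tri_rightOption (hT : ¬T.IsAtom)
    (hTL : ∀ x, T.IsLeftOption x → x = K) {g : Game A} (hg : IsRightTrap T g) :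
    (Le g T → ∀ w, K.IsRightOption w → Le g w) ∧
      (Tri g T → ∀ w, K.IsRightOption w → Tri g w) := by
  induction g using optionInduction with
  | ind g ihL ihR =>
    refine ⟨fun hle w hw => ?_, fun htri w hw => ?_⟩
    · obtain ⟨hgL, hgR, -⟩ := hle
      have hsmall := hg g (IsSubposition.refl g) hgR
      refine Le.mk (fun u hu => ?_) (fun _ _ => hsmall _) fun _ => hsmall _
      exact (ihL u hu fun v hv => hg v (hv.of_isLeftOption hu)).2 (hgL u hu) w hw
    · cases htri with
      | ofRight hy hle =>
        exact Tri.ofRight hy ((ihR _ hy fun v hv => hg v (hv.of_isRightOption hy)).1 hle w hw)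
      | ofLeft hx hle =>
        obtain rfl := hTL _ hx
        obtain ⟨-, hKR, -⟩ := hle
        exact hKR w hw
      | ofAtom => exact absurd trivial hT

theorem IsLeftTrap.le_and_tri_leftOption (hT : ¬T.IsAtom)
    (hTR : ∀ y, T.IsRightOption y → y = H) {g : Game A} (hg : IsLeftTrap T g) :
    (Le T g → ∀ u, H.IsLeftOption u → Le u g) ∧
      (Tri T g → ∀ u, H.IsLeftOption u → Tri u g) := by
  induction g using optionInduction with
  | ind g ihL ihR =>
    refine ⟨fun hle u hu => ?_, fun htri u hu => ?_⟩
    · obtain ⟨hgL, hgR, -⟩ := hle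
      have hbig := hg g (IsSubposition.refl g) hgL
      refine Le.mk (fun _ _ => hbig _) (fun w hw => ?_) fun _ => hbig _
      exact (ihR w hw fun v hv => hg v (hv.of_isRightOption hw)).2 (hgR w hw) u hu
    · cases htri with
      | ofRight hy hle =>
        obtain rfl := hTR _ hy
        obtain ⟨hHL, -, -⟩ := hle
        exact hHL u hu
      | ofLeft hx hle =>
        exact Tri.ofLeft hx ((ihL _ hx fun v hv => hg v (hv.of_isLeftOption hx)).1 hle u hu)
      | ofAtom => exact absurd trivial hT

theorem tri_of_tri_of_isAtom_left {g : Game A} (hT : ¬T.IsAtom)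
    (hTL : ∀ x, T.IsLeftOption x → x = K) (hg : g.IsAtom) (h : Tri g T) : Tri g K := by
  cases h with
  | ofRight hy => exact absurd hy hg.not_isRightOption
  | ofLeft hx hle =>
    obtain rfl := hTL _ hx
    obtain ⟨-, -, hatom⟩ := hle
    exact hatom (Or.inl hg)
  | ofAtom => exact absurd trivial hT

theorem tri_of_tri_of_isAtom_right {g : Game A} (hT : ¬T.IsAtom)
    (hTR : ∀ y, T.IsRightOption y → y = H) (hg : g.IsAtom) (h : Tri T g) : Tri H g := by
  cases h with
  | ofRight hy hle =>
    obtain rfl := hTR _ hy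
    obtain ⟨-, -, hatom⟩ := hle
    exact hatom (Or.inr hg)
  | ofLeft hx => exact absurd hx hg.not_isLeftOption
  | ofAtom => exact absurd trivial hT

end Trap

end Ord

end Game

/-- `H ≤ K` holds iff both `H ≤_L K` and `H ≤_R K` hold. -/
theorem Game.le_iff_leL_and_leR {A : Type} [PartialOrder A] (H K : Game A) :
    Game.Le H K ↔
      ((∀ (ιL ιR : Type) (L : ιL → Game A) (hR : Nonempty ιR) (R : ιR → Game A),
          Game.Le
            (Game.comp (Unit ⊕ ιL) ιR (Sum.elim (fun _ => H) L) R ⟨Sum.inl ()⟩ hR)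
            (Game.comp (Unit ⊕ ιL) ιR (Sum.elim (fun _ => K) L) R ⟨Sum.inl ()⟩ hR)) ∧
       (∀ (ιL ιR : Type) (hL : Nonempty ιL) (L : ιL → Game A) (R : ιR → Game A),
          Game.Le
            (Game.comp ιL (Unit ⊕ ιR) L (Sum.elim (fun _ => H) R) hL ⟨Sum.inl ()⟩)
            (Game.comp ιL (Unit ⊕ ιR) L (Sum.elim (fun _ => K) R) hL ⟨Sum.inl ()⟩))) := by
  refine ⟨fun h => ⟨fun _ _ _ _ _ => ?_, fun _ _ _ _ _ => ?_⟩, fun ⟨hleL, hleR⟩ => ?_⟩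
  · exact comp_le_comp_of_le_left (Sum.rec (fun _ => h) fun _ => Le.refl _)
  · exact comp_le_comp_of_le_right (Sum.rec (fun _ => h) fun _ => Le.refl _)
  obtain ⟨hHT, -, -⟩ := hleL Empty _ Empty.elim (nonempty_subpositions H)
    fun p => rightTrap ((subpositions H).2 p)
  obtain ⟨-, hTK, -⟩ := hleR _ Empty (nonempty_subpositions K)
    (fun p => leftTrap ((subpositions K).2 p)) Empty.elim
  have hH := hHT H ⟨Sum.inl (), rfl⟩
  have hK := hTK K ⟨Sum.inl (), rfl⟩
  refine Le.mk (fun u hu => ?_) (fun w hw => ?_) ?_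
  · exact ((isLeftTrap_comp_leftTrap K).le_and_tri_leftOption id
      eq_of_isRightOption_comp_sumElim_empty).2 hK u hu
  · exact ((isRightTrap_comp_rightTrap H).le_and_tri_rightOption id
      eq_of_isLeftOption_comp_sumElim_empty).2 hH w hw
  · rintro (hat | hat)
    · exact tri_of_tri_of_isAtom_left id eq_of_isLeftOption_comp_sumElim_empty hat hH
    · exact tri_of_tri_of_isAtom_right id eq_of_isRightOption_comp_sumElim_empty hat hK
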